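/- Let A := colim_{B≥1} F_{≥B} be the filtered colimit of rings taken along the natural projections F_{≥B} → F_{≥B+1} (which forget the B-th coordinate). Then A is a henselian local ring, and the compatible projections F_{≥B} → F_∞ induce an isomorphism from the residue field of A onto F_∞. -/

import Mathlib

/-!
Every element of `A` comes from some `F_{≥B}`. The kernel of `F_{≥B} → F_∞` consists of elements
whose coordinates are divisible by arbitrarily high powers of `π_i` for large `i`, so `1 + z` with
`z` in this kernel becomes invertible once finitely many coordinates are forgotten; as
`F_{≥B} → F_∞` is onto a field, every element of `A` with nonzero image in `F_∞` is a unit. Hence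
`A` is local with residue field `F_∞`.

For the Henselian property it suffices to find a root in the maximal ideal of a polynomial `G`
with `G.coeff 1 = 1` and `G.coeff 0` in the maximal ideal. Lift `G` to some `F_{≥B}`, clear
denominators and rescale `t ↦ π^N t`: this gives a polynomial over `O` whose linear coefficient
has `∞`-coordinate `1` and whose constant coefficient has `∞`-coordinate `0`. For large `i`,
Newton's method in the complete ring `O_i` yields a root lying in the ideal generated by the
constant coefficient; these roots form an element of `O`, which is a root in `F_{≥B'}` for `B'`
large.
-/

open PowerSeries

set_option maxHeartbeats 1000000
set_option synthInstance.maxHeartbeats 400000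

noncomputable section

variable (k : Type) [Field k]
variable (O : ℕ → Type) [∀ i, CommRing (O i)]
variable (π : ∀ i, O i) (e : ℕ → ℕ)
variable (ψ : ∀ i, ((PowerSeries k) ⧸ (Ideal.span {(X : PowerSeries k) ^ e i})) ≃+*
    ((O i) ⧸ (Ideal.span {π i ^ e i})))
variable (hψ : ∀ i, ψ i (Ideal.Quotient.mk _ (X : PowerSeries k)) = Ideal.Quotient.mk _ (π i))

/-- The product ring `∏_{i ∈ ℕ} O_i × O_∞`, where `O_∞ = k[[π_∞]]`. -/
abbrev ProdRing : Type := ((i : ℕ) → O i) × PowerSeries k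

/-- The defining condition for membership in the subring `O`:
for every `n ≥ 1` there is `B ≥ n` such that for all `i ≥ B` the `i`-th coordinate is
congruent to (a lift of) `ψ_i` of the `∞`-coordinate modulo `π_i^n`. -/
def closeMem (x : ProdRing k O) : Prop :=
  ∀ n : ℕ, 1 ≤ n → ∃ B, n ≤ B ∧ ∀ i, B ≤ i → ∃ y : O i,
    Ideal.Quotient.mk (Ideal.span {π i ^ e i}) y
      = ψ i (Ideal.Quotient.mk (Ideal.span {(X : PowerSeries k) ^ e i}) x.2)
    ∧ x.1 i - y ∈ Ideal.span {π i ^ n}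

/-- The ring `O` of a family of close fields, as a subring of `∏_{i ∈ ℕ} O_i × O_∞`. -/
def closeSubring : Subring (ProdRing k O) where
  carrier := {x | closeMem k O π e ψ x}
  zero_mem' := by
    intro n hn
    refine ⟨n, le_rfl, fun i hi => ⟨0, by simp, by simp⟩⟩
  one_mem' := by
    intro n hn
    refine ⟨n, le_rfl, fun i hi => ⟨1, by simp, by simp⟩⟩
  add_mem' := by
    intro a b ha hb n hn
    obtain ⟨B1, hB1, h1⟩ := ha n hn
    obtain ⟨B2, hB2, h2⟩ := hb n hn
    refine ⟨max B1 B2, hB1.trans (le_max_left _ _), fun i hi => ?_⟩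
    obtain ⟨y1, hy1, hy1'⟩ := h1 i ((le_max_left _ _).trans hi)
    obtain ⟨y2, hy2, hy2'⟩ := h2 i ((le_max_right _ _).trans hi)
    refine ⟨y1 + y2, ?_, ?_⟩
    · have : (a + b).2 = a.2 + b.2 := rfl
      rw [this, map_add, map_add, map_add, hy1, hy2]
    · have : (a + b).1 i - (y1 + y2) = (a.1 i - y1) + (b.1 i - y2) := by
        show a.1 i + b.1 i - (y1 + y2) = _
        ring
      rw [this]
      exact Ideal.add_mem _ hy1' hy2'
  neg_mem' := by
    intro a ha n hn
    obtain ⟨B, hB, h⟩ := ha n hn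
    refine ⟨B, hB, fun i hi => ?_⟩
    obtain ⟨y, hy, hy'⟩ := h i hi
    refine ⟨-y, ?_, ?_⟩
    · have : (-a).2 = -a.2 := rfl
      rw [this, map_neg, map_neg, map_neg, hy]
    · have : (-a).1 i - (-y) = -(a.1 i - y) := by
        show -a.1 i - (-y) = _
        ring
      rw [this]
      exact neg_mem hy'
  mul_mem' := by
    intro a b ha hb n hn
    obtain ⟨B1, hB1, h1⟩ := ha n hn
    obtain ⟨B2, hB2, h2⟩ := hb n hn
    refine ⟨max B1 B2, hB1.trans (le_max_left _ _), fun i hi => ?_⟩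
    obtain ⟨y1, hy1, hy1'⟩ := h1 i ((le_max_left _ _).trans hi)
    obtain ⟨y2, hy2, hy2'⟩ := h2 i ((le_max_right _ _).trans hi)
    refine ⟨y1 * y2, ?_, ?_⟩
    · have : (a * b).2 = a.2 * b.2 := rfl
      rw [this, map_mul, map_mul, map_mul, hy1, hy2]
    · have : (a * b).1 i - (y1 * y2) = (a.1 i - y1) * b.1 i + y1 * (b.1 i - y2) := by
        show a.1 i * b.1 i - (y1 * y2) = _
        ring
      rw [this]
      exact Ideal.add_mem _ (Ideal.mul_mem_right _ _ hy1') (Ideal.mul_mem_left _ _ hy2')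

/-- The element `π = (π_1, π_2, …, π_∞)` of `O`. -/
def piO : closeSubring k O π e ψ :=
  ⟨(π, (X : PowerSeries k)), by
    intro n hn
    exact ⟨n, le_rfl, fun i hi => ⟨π i, (hψ i).symm, by simp⟩⟩⟩

/-- The ring `F = O[1/π]`. -/
abbrev Fring : Type := Localization.Away (piO k O π e ψ hψ)

/-- Coordinate projection `O → O_j` for `j ∈ ℕ`. -/
def projO (j : ℕ) : closeSubring k O π e ψ →+* O j :=
  (Pi.evalRingHom O j).comp ((RingHom.fst _ _).comp (closeSubring k O π e ψ).subtype)

/-- Coordinate projection `O → O_∞`. -/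
def projInf : closeSubring k O π e ψ →+* PowerSeries k :=
  (RingHom.snd _ _).comp (closeSubring k O π e ψ).subtype

/-- The product ring `∏_{i ≥ B} O_i × O_∞`. -/
abbrev ProdRingGe (B : ℕ) : Type := ((i : {i : ℕ // B ≤ i}) → O i.1) × PowerSeries k

/-- The projection `∏_{i ∈ ℕ} O_i × O_∞ → ∏_{i ≥ B} O_i × O_∞`. -/
def projGe (B : ℕ) : ProdRing k O →+* ProdRingGe k O B :=
  RingHom.prodMap (Pi.ringHom fun i => Pi.evalRingHom O i.1) (RingHom.id _)

/-- The composite `O → ∏_{i ≥ B} O_i × O_∞`. -/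
def toGe (B : ℕ) : closeSubring k O π e ψ →+* ProdRingGe k O B :=
  (projGe k O B).comp (closeSubring k O π e ψ).subtype

/-- `O_{≥ B}`, the image of `O` under the coordinate projection. -/
def OgeB (B : ℕ) : Subring (ProdRingGe k O B) := (toGe k O π e ψ B).range

/-- The projection `O → O_{≥ B}`. -/
def toOgeB (B : ℕ) : closeSubring k O π e ψ →+* OgeB k O π e ψ B :=
  (toGe k O π e ψ B).rangeRestrict

/-- The image of `π` in `O_{≥ B}`. -/
def piGe (B : ℕ) : OgeB k O π e ψ B := toOgeB k O π e ψ B (piO k O π e ψ hψ)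

/-- The ring `F_{≥ B} = O_{≥ B}[1/π]`. -/
abbrev FgeB (B : ℕ) : Type := Localization.Away (piGe k O π e ψ hψ B)

/-- The projection `F → F_{≥ B}`. -/
def projFge (B : ℕ) : Fring k O π e ψ hψ →+* FgeB k O π e ψ hψ B :=
  Localization.awayLift
    ((algebraMap (OgeB k O π e ψ B) (FgeB k O π e ψ hψ B)).comp (toOgeB k O π e ψ B))
    (piO k O π e ψ hψ)
    (IsLocalization.map_units (M := Submonoid.powers (piGe k O π e ψ hψ B)) _
      ⟨piGe k O π e ψ hψ B, Submonoid.mem_powers _⟩)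

/-- `F_{≥ B} = O_{≥ B}[1/π]` (wrapped in a definition). -/
def FgeBI (B : ℕ) : Type := FgeB k O π e ψ hψ B

instance (B : ℕ) : CommRing (FgeBI k O π e ψ hψ B) :=
  inferInstanceAs (CommRing (FgeB k O π e ψ hψ B))

instance (B : ℕ) : Algebra (OgeB k O π e ψ B) (FgeBI k O π e ψ hψ B) :=
  inferInstanceAs (Algebra (OgeB k O π e ψ B) (FgeB k O π e ψ hψ B))

instance (B : ℕ) : IsLocalization.Away (piGe k O π e ψ hψ B) (FgeBI k O π e ψ hψ B) :=
  inferInstanceAs (IsLocalization.Away (piGe k O π e ψ hψ B) (FgeB k O π e ψ hψ B))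

/-- The `∞`-coordinate projection `O_{≥ B} → O_∞`. -/
def sndGe (B : ℕ) : OgeB k O π e ψ B →+* PowerSeries k :=
  (RingHom.snd _ _).comp (OgeB k O π e ψ B).subtype

/-- The projection `F_{≥ B} → F_∞`. -/
def FgeBtoFinf (B : ℕ) : FgeBI k O π e ψ hψ B →+* FractionRing (PowerSeries k) :=
  Localization.awayLift
    ((algebraMap (PowerSeries k) (FractionRing (PowerSeries k))).comp (sndGe k O π e ψ B))
    (piGe k O π e ψ hψ B)
    (IsLocalization.map_units (M := nonZeroDivisors (PowerSeries k))
      (FractionRing (PowerSeries k))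
      ⟨(X : PowerSeries k), mem_nonZeroDivisors_of_ne_zero PowerSeries.X_ne_zero⟩)

/-- The projection `∏_{i ≥ B} O_i × O_∞ → ∏_{i ≥ B+1} O_i × O_∞`. -/
def projGeStep (B : ℕ) : ProdRingGe k O B →+* ProdRingGe k O (B + 1) :=
  RingHom.prodMap
    (Pi.ringHom fun i =>
      Pi.evalRingHom (fun j : {j : ℕ // B ≤ j} => O j.1) ⟨i.1, le_trans (Nat.le_succ B) i.2⟩)
    (RingHom.id _)

/-- The natural projection `O_{≥ B} → O_{≥ B+1}`. -/
def stepO (B : ℕ) : OgeB k O π e ψ B →+* OgeB k O π e ψ (B + 1) :=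
  RingHom.codRestrict ((projGeStep k O B).comp (OgeB k O π e ψ B).subtype)
    (OgeB k O π e ψ (B + 1))
    (fun y => by
      obtain ⟨x, hx⟩ := RingHom.mem_range.mp y.2
      refine RingHom.mem_range.mpr ⟨x, ?_⟩
      have hy : ((projGeStep k O B).comp (OgeB k O π e ψ B).subtype) y
          = projGeStep k O B (y : ProdRingGe k O B) := rfl
      rw [hy, ← hx]
      rfl)

/-- The projection `O_{≥ B} → O_{≥ B+1}` sends `π` to `π`. -/
lemma stepO_piGe (B : ℕ) :
    stepO k O π e ψ B (piGe k O π e ψ hψ B) = piGe k O π e ψ hψ (B + 1) := by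
  refine Subtype.ext (Prod.ext ?_ ?_)
  · funext i
    rfl
  · rfl

/-- The natural projection `F_{≥ B} → F_{≥ B+1}` (forgetting the `B`-th coordinate). -/
def FgeBstep (B : ℕ) : FgeBI k O π e ψ hψ B →+* FgeBI k O π e ψ hψ (B + 1) :=
  Localization.awayLift
    ((algebraMap (OgeB k O π e ψ (B + 1)) (FgeBI k O π e ψ hψ (B + 1))).comp
      (stepO k O π e ψ B))
    (piGe k O π e ψ hψ B)
    (by
      rw [RingHom.comp_apply, stepO_piGe]
      exact IsLocalization.map_units (M := Submonoid.powers (piGe k O π e ψ hψ (B + 1)))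
        (FgeBI k O π e ψ hψ (B + 1))
        ⟨piGe k O π e ψ hψ (B + 1), Submonoid.mem_powers _⟩)

/-- The transition maps `F_{≥ B} → F_{≥ B'}` for `B ≤ B'`. -/
def transitF : ∀ {B B' : ℕ}, B ≤ B' → (FgeBI k O π e ψ hψ B →+* FgeBI k O π e ψ hψ B') :=
  fun {B B'} h =>
    Nat.leRec (motive := fun m _ => FgeBI k O π e ψ hψ B →+* FgeBI k O π e ψ hψ m)
      (RingHom.id _)
      (fun {m} (_ : B ≤ m) ih => (FgeBstep k O π e ψ hψ m).comp ih) h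


open Polynomial Filter IsLocalRing

theorem HenselianLocalRing.of_exists_isRoot {A : Type*} [CommRing A] [IsLocalRing A]
    (h : ∀ G : A[X], G.coeff 1 = 1 → G.coeff 0 ∈ maximalIdeal A →
      ∃ t ∈ maximalIdeal A, G.IsRoot t) :
    HenselianLocalRing A where
  is_henselian f _ a₀ h₀ hu := by
    obtain ⟨t, ht, hroot⟩ := h (Polynomial.C (↑hu.unit⁻¹ : A) * taylor a₀ f)
      (by rw [Polynomial.coeff_C_mul, taylor_coeff_one, IsUnit.val_inv_mul])
      (by rw [Polynomial.coeff_C_mul, taylor_coeff_zero]; exact Ideal.mul_mem_left _ _ h₀)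
    refine ⟨t + a₀, ?_, by rwa [add_sub_cancel_right]⟩
    rw [IsRoot, eval_mul, eval_C, taylor_eval, Units.mul_right_eq_zero] at hroot
    exact hroot

section Newton

variable {R : Type*} [CommRing R] {I : Ideal R}

lemma eval_sub_eval_zero_mem {a : R} (ha : a ∈ I) (H : R[X]) : H.eval a - H.eval 0 ∈ I :=
  I.mem_of_dvd (by simpa using sub_dvd_eval_sub a 0 H) ha

theorem IsAdicComplete.exists_isRoot_mem [IsAdicComplete I R] (H : R[X])
    (h1 : H.coeff 1 - 1 ∈ I) (h0 : H.coeff 0 ∈ I) : ∃ a ∈ I, H.IsRoot a := by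
  -- Newton's iteration `z ↦ z - H z`; since `H' ≡ 1 mod I` on `I`, each step gains a power of `I`.
  let z : ℕ → R := fun n => Nat.rec 0 (fun _ y => y - H.eval y) n
  have hz : ∀ n, z (n + 1) = z n - H.eval (z n) := fun _ => rfl
  have key : ∀ n, z n ∈ I ∧ H.eval (z n) ∈ I ^ (n + 1) := by
    intro n
    induction n with
    | zero => exact ⟨I.zero_mem, by simpa [z, ← coeff_zero_eq_eval_zero] using h0⟩
    | succ n ih =>
      obtain ⟨hzI, hHz⟩ := ih
      have hder : H.derivative.eval (z n) - 1 ∈ I := by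
        have h' : H.derivative.eval 0 = H.coeff 1 := by
          simp [← coeff_zero_eq_eval_zero, Polynomial.coeff_derivative]
        have := add_mem (eval_sub_eval_zero_mem hzI H.derivative) h1
        rwa [h', sub_add_sub_cancel] at this
      obtain ⟨c, hc⟩ := binomExpansion H (z n) (-H.eval (z n))
      refine ⟨I.sub_mem hzI (Ideal.pow_le_self n.succ_ne_zero hHz), ?_⟩
      rw [hz, sub_eq_add_neg, hc, show ∀ a b : R, a + b * -a + c * (-a) ^ 2
        = -((b - 1) * a) + c * a ^ 2 from fun a b => by ring]
      refine add_mem (neg_mem ?_) (Ideal.mul_mem_left _ _ ?_)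
      · rw [pow_succ']
        exact Ideal.mul_mem_mul hder hHz
      · have := Ideal.pow_mem_pow hHz 2
        rw [← pow_mul] at this
        exact Ideal.pow_le_pow_right (by omega) this
  obtain ⟨L, hL⟩ := IsPrecomplete.prec' z ((AdicCompletion.isAdicCauchy_iff I R z).mpr fun n => by
    rw [SModEq.sub_mem, hz, sub_sub_cancel, smul_eq_mul, Ideal.mul_top]
    exact Ideal.pow_le_pow_right n.le_succ (key n).2)
  refine ⟨L, ?_, IsHausdorff.haus' (I := I) _ fun n => ?_⟩
  · have := hL 1
    rw [SModEq.sub_mem, pow_one, smul_eq_mul, Ideal.mul_top] at this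
    simpa using I.sub_mem (key 1).1 this
  · refine ((hL n).symm.eval H).trans ?_
    rw [SModEq.zero, smul_eq_mul, Ideal.mul_top]
    exact Ideal.pow_le_pow_right n.le_succ (key n).2

lemma mem_span_coeff_zero_of_isRoot (hI : I ≤ Ideal.jacobson ⊥) {H : R[X]}
    (h1 : H.coeff 1 - 1 ∈ I) {a : R} (ha : a ∈ I) (hroot : H.IsRoot a) :
    a ∈ Ideal.span {H.coeff 0} := by
  have hsplit : H.coeff 0 + a * H.divX.eval a = 0 := by
    have := congr_arg (eval a) (X_mul_divX_add H)
    rw [eval_add, eval_mul, eval_X, eval_C, hroot.eq_zero] at this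
    linear_combination this
  have hunit : IsUnit (H.divX.eval a) := by
    refine Ideal.isUnit_of_sub_one_mem_jacobson_bot _ (hI ?_)
    have := add_mem (eval_sub_eval_zero_mem ha H.divX) h1
    rwa [← coeff_zero_eq_eval_zero, coeff_divX, zero_add, sub_add_sub_cancel] at this
  exact Ideal.mem_span_singleton'.mpr ⟨-↑hunit.unit⁻¹, by
    linear_combination (-↑hunit.unit⁻¹ : R) * hsplit + a * hunit.mul_val_inv⟩

end Newton

theorem exists_C_mul_map_eq_comp_C_mul_X {S R : Type*} [CommRing S] [CommRing R] (ι : S →+* R)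
    {c : R} (hc : IsUnit c) (hcι : c ∈ ι.range) {G : R[X]} (h1 : G.coeff 1 = 1)
    (hG : ∀ j, c * G.coeff j ∈ ι.range) (h0 : ∃ x, c * ι x = G.coeff 0) :
    ∃ P : S[X], Polynomial.C c * P.map ι = G.comp (Polynomial.C c * Polynomial.X) := by
  have hlifts :
      Polynomial.C (↑hc.unit⁻¹ : R) * G.comp (Polynomial.C c * Polynomial.X) ∈ lifts ι := by
    refine (lifts_iff_coeff_lifts _).mpr fun j => ?_
    rw [Polynomial.coeff_C_mul, comp_C_mul_X_coeff]
    match j with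
    | 0 =>
      obtain ⟨x, hx⟩ := h0
      exact ⟨x, by rw [← hx, pow_zero, mul_one, ← mul_assoc, hc.val_inv_mul, one_mul]⟩
    | 1 => exact ⟨1, by rw [h1, one_mul, pow_one, hc.val_inv_mul, map_one]⟩
    | j + 2 =>
      have : ↑hc.unit⁻¹ * (G.coeff (j + 2) * c ^ (j + 2)) = c ^ j * (c * G.coeff (j + 2)) := by
        rw [pow_add, pow_two]
        linear_combination (c ^ j * c * G.coeff (j + 2)) * hc.val_inv_mul
      rw [this]
      exact ι.range.mul_mem (ι.range.pow_mem hcι j) (hG _)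
  obtain ⟨P, hP⟩ := hlifts
  exact ⟨P, by rw [← coe_mapRingHom, hP, ← mul_assoc, ← Polynomial.C_mul, hc.mul_val_inv,
    Polynomial.C_1, one_mul]⟩

lemma Localization.awayLift_algebraMap {R P : Type*} [CommRing R] [CommRing P] (f : R →+* P) (r : R)
    (hr : IsUnit (f r)) (a : R) :
    Localization.awayLift f r hr (algebraMap R (Localization.Away r) a) = f a :=
  IsLocalization.Away.lift_eq r hr a

section NatSystem

variable {R : ℕ → Type*} [∀ n, CommRing (R n)] (f : ∀ n, R n →+* R (n + 1))

def natTransit {m n : ℕ} (h : m ≤ n) : R m →+* R n :=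
  Nat.leRec (motive := fun n _ => R m →+* R n) (RingHom.id _) (fun {n} _ φ => (f n).comp φ) h

@[simp]
lemma natTransit_refl (m : ℕ) (x : R m) : natTransit f (le_refl m) x = x := by
  simp [natTransit]

lemma natTransit_succ {m n : ℕ} (h : m ≤ n) (x : R m) :
    natTransit f (h.trans n.le_succ) x = f n (natTransit f h x) := by
  simp [natTransit, Nat.leRec_succ _ _ h]

lemma apply_natTransit_of_comp_eq {S : Type*} [CommRing S] {g : ∀ n, R n →+* S}
    (hg : ∀ n, (g (n + 1)).comp (f n) = g n) {m n : ℕ} (h : m ≤ n) (x : R m) :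
    g n (natTransit f h x) = g m x := by
  induction n, h using Nat.le_induction with
  | base => rw [natTransit_refl]
  | succ n h ih => rw [natTransit_succ f h, ← ih, ← hg n, RingHom.comp_apply]

lemma natTransit_natTransit {l m n : ℕ} (h : l ≤ m) (h' : m ≤ n) (x : R l) :
    natTransit f h' (natTransit f h x) = natTransit f (h.trans h') x := by
  induction n, h' using Nat.le_induction with
  | base => rw [natTransit_refl]
  | succ n h' ih => rw [natTransit_succ f h', natTransit_succ f (h.trans h'), ih]

lemma natTransit_comp_natTransit {l m n : ℕ} (h : l ≤ m) (h' : m ≤ n) :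
    (natTransit f h').comp (natTransit f h) = natTransit f (h.trans h') :=
  RingHom.ext (natTransit_natTransit f h h')

lemma natTransit_apply_of_comp_eq {S : Type*} [CommRing S] {ι : ∀ n, S →+* R n}
    (hι : ∀ n, (f n).comp (ι n) = ι (n + 1)) {m n : ℕ} (h : m ≤ n) (x : S) :
    natTransit f h (ι m x) = ι n x := by
  induction n, h using Nat.le_induction with
  | base => rw [natTransit_refl]
  | succ n h ih => rw [natTransit_succ f h, ih, ← hι n, RingHom.comp_apply]

structure IsNatColimit {A : Type*} [CommRing A] (g : ∀ n, R n →+* A) : Prop where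
  comp_eq : ∀ n, (g (n + 1)).comp (f n) = g n
  exists_apply_eq : ∀ a, ∃ (n : ℕ) (x : R n), g n x = a
  exists_natTransit_eq_zero : ∀ n x, g n x = 0 → ∃ (n' : ℕ) (h : n ≤ n'), natTransit f h x = 0

namespace IsNatColimit

variable {f} {A : Type*} [CommRing A] {g : ∀ n, R n →+* A} (hA : IsNatColimit f g)
include hA

lemma apply_natTransit {m n : ℕ} (h : m ≤ n) (x : R m) : g n (natTransit f h x) = g m x :=
  apply_natTransit_of_comp_eq f hA.comp_eq h x

lemma comp_natTransit {m n : ℕ} (h : m ≤ n) : (g n).comp (natTransit f h) = g m :=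
  RingHom.ext (hA.apply_natTransit h)

lemma exists_natTransit_eq {n : ℕ} {x y : R n} (hxy : g n x = g n y) :
    ∃ (n' : ℕ) (h : n ≤ n'), natTransit f h x = natTransit f h y := by
  obtain ⟨n', h, hn'⟩ := hA.exists_natTransit_eq_zero n (x - y) (by rw [map_sub, hxy, sub_self])
  exact ⟨n', h, sub_eq_zero.mp (by rwa [← map_sub])⟩

lemma exists_map_eq (p : A[X]) : ∃ (n : ℕ) (P : (R n)[X]), P.map (g n) = p := by
  induction p using Polynomial.induction_on' with
  | add p q hp hq =>
    obtain ⟨m, P, rfl⟩ := hp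
    obtain ⟨n, Q, rfl⟩ := hq
    refine ⟨max m n,
      P.map (natTransit f (le_max_left m n)) + Q.map (natTransit f (le_max_right m n)), ?_⟩
    rw [Polynomial.map_add, Polynomial.map_map, Polynomial.map_map, hA.comp_natTransit,
      hA.comp_natTransit]
  | monomial j a =>
    obtain ⟨n, x, rfl⟩ := hA.exists_apply_eq a
    exact ⟨n, monomial j x, map_monomial _⟩

variable {K : Type*} [Field K] {φ : ∀ n, R n →+* K} (hφ : ∀ n, (φ (n + 1)).comp (f n) = φ n)
  (hφsurj : ∀ n, Function.Surjective (φ n))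
  (hone_add : ∀ n x, φ n x = 0 → ∃ (n' : ℕ) (h : n ≤ n'), IsUnit (natTransit f h (1 + x)))
include hφ hφsurj hone_add

lemma isUnit_apply_iff {n : ℕ} (x : R n) : IsUnit (g n x) ↔ φ n x ≠ 0 := by
  constructor
  · rintro ⟨u, hu⟩
    obtain ⟨m, y, hy⟩ := hA.exists_apply_eq ↑u⁻¹
    have hxy : g (max n m) (natTransit f (le_max_left n m) x * natTransit f (le_max_right n m) y)
        = g (max n m) 1 := by
      rw [map_mul, hA.apply_natTransit, hA.apply_natTransit, hy, ← hu, Units.mul_inv, map_one]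
    obtain ⟨N, h, hN⟩ := hA.exists_natTransit_eq hxy
    have := congr_arg (φ N) hN
    simp only [map_mul, map_one, apply_natTransit_of_comp_eq f hφ] at this
    exact left_ne_zero_of_mul_eq_one this
  · intro hx
    obtain ⟨y, hy⟩ := hφsurj n (φ n x)⁻¹
    obtain ⟨N, h, hN⟩ := hone_add n (x * y - 1) (by rw [map_sub, map_mul, hy, mul_inv_cancel₀ hx,
      map_one, sub_self])
    rw [add_sub_cancel] at hN
    have := hN.map (g N)
    rw [hA.apply_natTransit, map_mul] at this
    exact isUnit_of_mul_isUnit_left this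

lemma isLocalRing : IsLocalRing A := by
  have : Nontrivial A := by
    refine ⟨⟨0, 1, fun h => ?_⟩⟩
    have := (hA.isUnit_apply_iff hφ hφsurj hone_add (0 : R 0)).mp (by simp [h])
    exact this (map_zero _)
  refine IsLocalRing.of_isUnit_or_isUnit_one_sub_self fun a => ?_
  obtain ⟨n, x, rfl⟩ := hA.exists_apply_eq a
  by_cases hx : φ n x = 0
  · right
    rw [← map_one (g n), ← map_sub, hA.isUnit_apply_iff hφ hφsurj hone_add, map_sub, hx, map_one,
      sub_zero]
    exact one_ne_zero
  · exact Or.inl ((hA.isUnit_apply_iff hφ hφsurj hone_add x).mpr hx)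

theorem henselianLocalRing
    (hroot : ∀ n (G : (R n)[X]), G.coeff 1 = 1 → φ n (G.coeff 0) = 0 →
      ∃ (n' : ℕ) (h : n ≤ n') (t : R n'), (G.map (natTransit f h)).IsRoot t ∧ φ n' t = 0) :
    HenselianLocalRing A := by
  have := hA.isLocalRing hφ hφsurj hone_add
  have hmem : ∀ {n} (x : R n), g n x ∈ maximalIdeal A ↔ φ n x = 0 := fun x => by
    rw [mem_maximalIdeal, mem_nonunits_iff, hA.isUnit_apply_iff hφ hφsurj hone_add, not_not]
  refine HenselianLocalRing.of_exists_isRoot fun G h1 h0 => ?_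
  obtain ⟨n, P, rfl⟩ := hA.exists_map_eq G
  rw [Polynomial.coeff_map] at h1 h0
  obtain ⟨n', hn', hP1⟩ := hA.exists_natTransit_eq (h1.trans (map_one _).symm)
  obtain ⟨n'', hn'', t, ht, hφt⟩ := hroot n' (P.map (natTransit f hn'))
    (by rw [Polynomial.coeff_map, hP1, map_one])
    (by rw [Polynomial.coeff_map, ← hmem, hA.apply_natTransit]; exact h0)
  refine ⟨g n'' t, (hmem t).mpr hφt, ?_⟩
  rw [Polynomial.map_map, natTransit_comp_natTransit] at ht
  rw [IsRoot, ← hA.comp_natTransit (hn'.trans hn''), ← Polynomial.map_map, eval_map_apply,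
    ht.eq_zero, map_zero]

end IsNatColimit

end NatSystem

namespace CloseFields

def toFge (B : ℕ) : closeSubring k O π e ψ →+* FgeBI k O π e ψ hψ B :=
  (algebraMap (OgeB k O π e ψ B) (FgeBI k O π e ψ hψ B)).comp (toOgeB k O π e ψ B)

variable {k O π e ψ hψ}

local notation "𝒪" => closeSubring k O π e ψ
local notation "𝔽" => FgeBI k O π e ψ hψ
local notation "Φ" => FgeBtoFinf k O π e ψ hψ
local notation "ι" => toFge k O π e ψ hψ
local notation "ϖ" => piO k O π e ψ hψ
local notation "𝕂" => FractionRing (PowerSeries k)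
local notation "τ" => transitF k O π e ψ hψ

@[simp]
lemma coe_piO : (ϖ : ProdRing k O) = (π, PowerSeries.X) := rfl

lemma isUnit_toFge_piO (B : ℕ) : IsUnit (ι B ϖ) :=
  IsLocalization.Away.algebraMap_isUnit (piGe k O π e ψ hψ B)

lemma FgeBtoFinf_toFge (B : ℕ) (x : 𝒪) :
    Φ B (ι B x) = algebraMap (PowerSeries k) 𝕂 (x : ProdRing k O).2 := by
  unfold FgeBtoFinf
  exact Localization.awayLift_algebraMap _ _ _ _

lemma FgeBstep_comp_toFge (B : ℕ) : (FgeBstep k O π e ψ hψ B).comp (ι B) = ι (B + 1) := by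
  ext x
  rw [RingHom.comp_apply]
  unfold FgeBstep
  exact (Localization.awayLift_algebraMap _ _ _ _).trans (congr_arg _ (Subtype.ext rfl))

lemma transitF_toFge {B B' : ℕ} (h : B ≤ B') (x : 𝒪) :
    τ h (ι B x) = ι B' x :=
  natTransit_apply_of_comp_eq _ FgeBstep_comp_toFge h x

lemma transitF_transitF {B B' B'' : ℕ} (h : B ≤ B') (h' : B' ≤ B'') (z : 𝔽 B) :
    τ h' (τ h z) = τ (h.trans h') z :=
  natTransit_natTransit _ h h' z

lemma transitF_comp_transitF {B B' B'' : ℕ} (h : B ≤ B') (h' : B' ≤ B'') :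
    (τ h').comp (τ h) = τ (h.trans h') :=
  natTransit_comp_natTransit _ h h'

lemma transitF_comp_toFge {B B' : ℕ} (h : B ≤ B') :
    (τ h).comp (ι B) = ι B' :=
  RingHom.ext (transitF_toFge h)

lemma FgeBtoFinf_comp_FgeBstep (B : ℕ) :
    (Φ (B + 1)).comp (FgeBstep k O π e ψ hψ B) = Φ B := by
  refine IsLocalization.ringHom_ext (Submonoid.powers (piGe k O π e ψ hψ B)) (RingHom.ext ?_)
  rintro ⟨_, x, rfl⟩
  change Φ (B + 1) (FgeBstep k O π e ψ hψ B (ι B x)) = Φ B (ι B x)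
  rw [← RingHom.comp_apply _ (ι B), FgeBstep_comp_toFge, FgeBtoFinf_toFge, FgeBtoFinf_toFge]

lemma toOgeB_surjective (B : ℕ) : Function.Surjective (toOgeB k O π e ψ B) :=
  RingHom.rangeRestrict_surjective _

lemma FgeBtoFinf_transitF {B B' : ℕ} (h : B ≤ B') (z : 𝔽 B) :
    Φ B' (τ h z) = Φ B z :=
  apply_natTransit_of_comp_eq _ FgeBtoFinf_comp_FgeBstep h z

lemma exists_pow_mul_coeff_mem_range {B : ℕ} (G : (𝔽 B)[X]) :
    ∃ N : ℕ, ∀ j, ι B ϖ ^ N * G.coeff j ∈ (ι B).range := by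
  obtain ⟨_, ⟨N, rfl⟩, hG⟩ :=
    IsLocalization.integerNormalization_spec (Submonoid.powers (piGe k O π e ψ hψ B)) G
  refine ⟨N, fun j => ?_⟩
  obtain ⟨x, hx⟩ := toOgeB_surjective B
    ((IsLocalization.integerNormalization (Submonoid.powers (piGe k O π e ψ hψ B)) G).coeff j)
  refine ⟨x, ?_⟩
  rw [toFge, RingHom.comp_apply, hx, ← Polynomial.coeff_map, hG, Polynomial.coeff_smul,
    Algebra.smul_def, map_pow]
  rfl

lemma toFge_eq_toFge {B : ℕ} {x y : 𝒪}
    (h1 : ∀ i, B ≤ i → (x : ProdRing k O).1 i = (y : ProdRing k O).1 i)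
    (h2 : (x : ProdRing k O).2 = (y : ProdRing k O).2) : ι B x = ι B y := by
  rw [toFge, RingHom.comp_apply, RingHom.comp_apply]
  exact congr_arg _ (Subtype.ext (Prod.ext (funext fun i => h1 i.1 i.2) h2))

lemma exists_snd_eq (f : PowerSeries k) : ∃ x : 𝒪, (x : ProdRing k O).2 = f := by
  choose y hy using fun i => Ideal.Quotient.mk_surjective
    (ψ i (Ideal.Quotient.mk (Ideal.span {(PowerSeries.X : PowerSeries k) ^ e i}) f))
  exact ⟨⟨(y, f), fun n _ => ⟨n, le_rfl, fun i _ => ⟨y i, hy i, by simp⟩⟩⟩, rfl⟩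

lemma FgeBtoFinf_toFge_piO (B : ℕ) : Φ B (ι B ϖ) = algebraMap (PowerSeries k) 𝕂 PowerSeries.X :=
  FgeBtoFinf_toFge B ϖ

lemma FgeBtoFinf_surjective (B : ℕ) : Function.Surjective (Φ B) := by
  intro z
  obtain ⟨⟨a, s⟩, hz⟩ := IsLocalization.surj (nonZeroDivisors (PowerSeries k)) z
  obtain ⟨m, u, hs⟩ := IsDiscreteValuationRing.eq_unit_mul_pow_irreducible
    (nonZeroDivisors.ne_zero s.2) PowerSeries.X_irreducible
  obtain ⟨x, hx⟩ := exists_snd_eq (ψ := ψ) (a * ↑u⁻¹)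
  refine ⟨ι B x * ↑(isUnit_toFge_piO (hψ := hψ) B).unit⁻¹ ^ m, ?_⟩
  have hX : algebraMap (PowerSeries k) 𝕂 PowerSeries.X ≠ 0 :=
    (map_ne_zero_iff _ (IsFractionRing.injective _ _)).mpr PowerSeries.X_ne_zero
  rw [map_mul, map_pow, map_units_inv, IsUnit.unit_spec, FgeBtoFinf_toFge_piO, FgeBtoFinf_toFge,
    hx, inv_pow, ← div_eq_mul_inv, div_eq_iff (pow_ne_zero m hX)]
  have hu : algebraMap (PowerSeries k) 𝕂 ↑u * algebraMap (PowerSeries k) 𝕂 ↑u⁻¹ = 1 := by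
    rw [← map_mul, Units.mul_inv, map_one]
  rw [map_mul, ← hz, hs, map_mul, map_pow]
  linear_combination (z * algebraMap (PowerSeries k) 𝕂 PowerSeries.X ^ m) * hu

lemma eventually_mem_span_of_snd_eq_zero (he : ∀ i, i ≤ e i) {x : 𝒪}
    (hx : (x : ProdRing k O).2 = 0) (n : ℕ) :
    ∀ᶠ i in atTop, (x : ProdRing k O).1 i ∈ Ideal.span {π i ^ n} := by
  rcases n.eq_zero_or_pos with rfl | hn
  · simp
  obtain ⟨B, hnB, hB⟩ := x.2 n hn
  filter_upwards [eventually_ge_atTop B] with i hi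
  obtain ⟨y, hy, hxy⟩ := hB i hi
  rw [hx, map_zero, map_zero, Ideal.Quotient.eq_zero_iff_mem] at hy
  have hyn : y ∈ Ideal.span {π i ^ n} := Ideal.span_singleton_le_span_singleton.mpr
    (pow_dvd_pow _ ((hnB.trans hi).trans (he i))) hy
  simpa using add_mem hxy hyn

lemma mem_closeSubring_of_snd_eq_zero {x : ProdRing k O} (hx : x.2 = 0)
    (h : ∀ n, ∀ᶠ i in atTop, x.1 i ∈ Ideal.span {π i ^ n}) : x ∈ 𝒪 := by
  intro n _
  obtain ⟨B, hB⟩ := (h n).exists_forall_of_atTop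
  exact ⟨max n B, le_max_left n B, fun i hi =>
    ⟨0, by rw [hx]; simp, by simpa using hB i ((le_max_right n B).trans hi)⟩⟩

lemma exists_eventually_eq_pow_mul [∀ i, IsDomain (O i)] (he : ∀ i, i ≤ e i)
    (hπ : ∀ i, π i ≠ 0) {x : 𝒪} (hx : (x : ProdRing k O).2 = 0) (m : ℕ) :
    ∃ y : 𝒪, (y : ProdRing k O).2 = 0 ∧
      ∀ᶠ i in atTop, (x : ProdRing k O).1 i = π i ^ m * (y : ProdRing k O).1 i := by
  have : ∀ i, ∃ d : O i, (x : ProdRing k O).1 i ∈ Ideal.span {π i ^ m} →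
      (x : ProdRing k O).1 i = π i ^ m * d := fun i => by
    by_cases hi : (x : ProdRing k O).1 i ∈ Ideal.span {π i ^ m}
    · obtain ⟨d, hd⟩ := Ideal.mem_span_singleton.mp hi
      exact ⟨d, fun _ => hd⟩
    · exact ⟨0, fun h => absurd h hi⟩
  choose d hd using this
  have hdiv := eventually_mem_span_of_snd_eq_zero he hx m
  refine ⟨⟨(d, 0), mem_closeSubring_of_snd_eq_zero rfl fun n => ?_⟩, rfl,
    hdiv.mono fun i hi => hd i hi⟩
  filter_upwards [hdiv, eventually_mem_span_of_snd_eq_zero he hx (m + n)] with i hm hmn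
  rw [hd i hm, pow_add, Ideal.mem_span_singleton, mul_dvd_mul_iff_left (pow_ne_zero m (hπ i))]
    at hmn
  exact Ideal.mem_span_singleton.mpr hmn

lemma eventually_isUnit_toFge_one_add [∀ i, IsAdicComplete (Ideal.span {π i}) (O i)]
    (he : ∀ i, i ≤ e i) {x : 𝒪} (hx : (x : ProdRing k O).2 = 0) :
    ∀ᶠ B in atTop, IsUnit (ι B (1 + x)) := by
  have : ∀ i, ∃ v : O i, (x : ProdRing k O).1 i ∈ Ideal.span {π i} →
      (1 + (x : ProdRing k O).1 i) * (1 + v) = 1 ∧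
        v ∈ Ideal.span {(x : ProdRing k O).1 i} := fun i => by
    by_cases hi : (x : ProdRing k O).1 i ∈ Ideal.span {π i}
    · have hu : IsUnit (1 + (x : ProdRing k O).1 i) :=
        Ideal.isUnit_of_sub_one_mem_jacobson_bot _
          (IsAdicComplete.le_jacobson_bot _ (by rwa [add_sub_cancel_left]))
      refine ⟨↑hu.unit⁻¹ - 1, fun _ => ⟨by rw [add_sub_cancel, hu.mul_val_inv], ?_⟩⟩
      exact Ideal.mem_span_singleton'.mpr ⟨-↑hu.unit⁻¹, by
        linear_combination (-1 : O i) * hu.mul_val_inv⟩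
    · exact ⟨0, fun h => absurd h hi⟩
  choose v hv using this
  have hx1 : ∀ᶠ i in atTop, (x : ProdRing k O).1 i ∈ Ideal.span {π i} := by
    simpa using eventually_mem_span_of_snd_eq_zero he hx 1
  let y : 𝒪 := ⟨(v, 0), mem_closeSubring_of_snd_eq_zero rfl fun n => by
    filter_upwards [hx1, eventually_mem_span_of_snd_eq_zero he hx n] with i hi hn
    exact (Ideal.span_singleton_le_iff_mem _).mpr hn (hv i hi).2⟩
  rw [← eventually_forall_ge_atTop] at hx1
  filter_upwards [hx1] with B hB
  refine IsUnit.of_mul_eq_one (ι B (1 + y)) ?_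
  rw [← map_mul, ← map_one (ι B)]
  refine toFge_eq_toFge (fun i hi => (hv i (hB i hi)).1) ?_
  change (1 + (x : ProdRing k O).2) * (1 + 0) = 1
  rw [hx, add_zero, one_mul]

lemma snd_eq_zero_of_FgeBtoFinf_eq_zero {B N : ℕ} {z : 𝔽 B} {x : 𝒪} (hz : Φ B z = 0)
    (hx : ι B ϖ ^ N * z = ι B x) : (x : ProdRing k O).2 = 0 := by
  have := congr_arg (Φ B) hx
  rw [map_mul, hz, mul_zero, FgeBtoFinf_toFge, eq_comm] at this
  exact (map_eq_zero_iff _ (IsFractionRing.injective _ _)).mp this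

lemma exists_transitF_eq_toFge_mul_pow [∀ i, IsDomain (O i)] (he : ∀ i, i ≤ e i)
    (hπ : ∀ i, π i ≠ 0) {B : ℕ} {z : 𝔽 B} (hz : Φ B z = 0) (m : ℕ) :
    ∃ (B' : ℕ) (h : B ≤ B') (x : 𝒪), (x : ProdRing k O).2 = 0 ∧
      τ h z = ι B' x * ι B' ϖ ^ m := by
  obtain ⟨N, hN⟩ := exists_pow_mul_coeff_mem_range (Polynomial.C z)
  obtain ⟨x, hx⟩ := hN 0
  rw [Polynomial.coeff_C_zero] at hx
  have hx2 := snd_eq_zero_of_FgeBtoFinf_eq_zero hz hx.symm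
  obtain ⟨y, hy2, hy⟩ := exists_eventually_eq_pow_mul he hπ hx2 (N + m)
  rw [← eventually_forall_ge_atTop] at hy
  obtain ⟨B', hyB', hB'⟩ := (hy.and (eventually_ge_atTop B)).exists
  refine ⟨B', hB', y, hy2, ((isUnit_toFge_piO B').pow N).mul_left_cancel ?_⟩
  have hxy : ι B' x = ι B' (ϖ ^ (N + m) * y) :=
    toFge_eq_toFge (fun i hi => by simpa using hyB' i hi) (by simp [hx2, hy2])
  calc ι B' ϖ ^ N * τ hB' z
      = τ hB' (ι B ϖ ^ N * z) := by rw [map_mul, map_pow, transitF_toFge]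
    _ = ι B' ϖ ^ N * (ι B' y * ι B' ϖ ^ m) := by
      rw [← hx, transitF_toFge, hxy, map_mul, map_pow, pow_add]
      ring

lemma exists_isUnit_transitF_one_add [∀ i, IsDomain (O i)]
    [∀ i, IsAdicComplete (Ideal.span {π i}) (O i)] (he : ∀ i, i ≤ e i) (hπ : ∀ i, π i ≠ 0)
    {B : ℕ} {z : 𝔽 B} (hz : Φ B z = 0) :
    ∃ (B' : ℕ) (h : B ≤ B'), IsUnit (τ h (1 + z)) := by
  obtain ⟨B₁, h₁, x, hx2, hx⟩ := exists_transitF_eq_toFge_mul_pow he hπ hz 0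
  obtain ⟨B₂, hB₂, h₂⟩ :=
    ((eventually_isUnit_toFge_one_add (hψ := hψ) he hx2).and (eventually_ge_atTop B₁)).exists
  refine ⟨B₂, h₁.trans h₂, ?_⟩
  rwa [← transitF_transitF h₁ h₂, map_add, map_one, hx, pow_zero, mul_one, ← map_one (ι B₁),
    ← map_add, transitF_toFge]

/-- The root is found coordinatewise by Newton's method in the complete rings `O_i`; the roots are
uniformly `π`-adically small because they lie in the ideal generated by the constant coefficient. -/
lemma exists_eventually_toFge_eval_eq_zero [∀ i, IsAdicComplete (Ideal.span {π i}) (O i)]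
    (he : ∀ i, i ≤ e i) (P : 𝒪[X]) (h1 : (P.coeff 1 : ProdRing k O).2 = 1)
    (h0 : (P.coeff 0 : ProdRing k O).2 = 0) :
    ∃ a : 𝒪, (a : ProdRing k O).2 = 0 ∧ ∀ᶠ B in atTop, ι B (P.eval a) = 0 := by
  let p : ∀ i, (O i)[X] := fun i => P.map (projO k O π e ψ i)
  have hgood : ∀ᶠ i in atTop,
      (p i).coeff 1 - 1 ∈ Ideal.span {π i} ∧ (p i).coeff 0 ∈ Ideal.span {π i} := by
    have h1' := eventually_mem_span_of_snd_eq_zero he (x := P.coeff 1 - 1) (by simp [h1]) 1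
    filter_upwards [h1', eventually_mem_span_of_snd_eq_zero he h0 1] with i hi1 hi0
    rw [pow_one] at hi1 hi0
    simp only [p, Polynomial.coeff_map]
    exact ⟨hi1, hi0⟩
  have : ∀ i, ∃ a : O i, ((p i).coeff 1 - 1 ∈ Ideal.span {π i} ∧
      (p i).coeff 0 ∈ Ideal.span {π i}) → (p i).IsRoot a ∧ a ∈ Ideal.span {(p i).coeff 0} :=
    fun i => by
      by_cases hi : (p i).coeff 1 - 1 ∈ Ideal.span {π i} ∧ (p i).coeff 0 ∈ Ideal.span {π i}
      · obtain ⟨a, haI, ha⟩ := IsAdicComplete.exists_isRoot_mem (p i) hi.1 hi.2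
        exact ⟨a, fun _ =>
          ⟨ha, mem_span_coeff_zero_of_isRoot (IsAdicComplete.le_jacobson_bot _) hi.1 haI ha⟩⟩
      · exact ⟨0, fun h => absurd h hi⟩
  choose a ha using this
  let a' : 𝒪 := ⟨(a, 0), mem_closeSubring_of_snd_eq_zero rfl fun n => by
    filter_upwards [hgood, eventually_mem_span_of_snd_eq_zero he h0 n] with i hi hn
    have := (ha i hi).2
    rw [Polynomial.coeff_map] at this
    exact (Ideal.span_singleton_le_iff_mem _).mpr hn this⟩
  refine ⟨a', rfl, ?_⟩
  rw [← eventually_forall_ge_atTop] at hgood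
  filter_upwards [hgood] with B hB
  rw [← map_zero (ι B)]
  refine toFge_eq_toFge (fun i hi => ?_) ?_
  · change projO k O π e ψ i (P.eval a') = 0
    rw [← eval_map_apply]
    exact (ha i (hB i hi)).1
  · change projInf k O π e ψ (P.eval a') = 0
    rw [← eval_map_apply, show projInf k O π e ψ a' = 0 from rfl, ← coeff_zero_eq_eval_zero,
      Polynomial.coeff_map]
    exact h0

/-- After `t ↦ π^N t` every coefficient becomes integral; the constant one because it lies in the
kernel of `F_{≥B} → F_∞`, hence is eventually divisible by any power of `π`. -/
lemma exists_rescaled_lift [∀ i, IsDomain (O i)] (he : ∀ i, i ≤ e i) (hπ : ∀ i, π i ≠ 0)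
    {B : ℕ} (G : (𝔽 B)[X]) (h1 : G.coeff 1 = 1) (h0 : Φ B (G.coeff 0) = 0) :
    ∃ (B' : ℕ) (h : B ≤ B') (N : ℕ) (P : 𝒪[X]),
      Polynomial.C (ι B' (ϖ ^ N)) * P.map (ι B') =
        (G.map (τ h)).comp (Polynomial.C (ι B' (ϖ ^ N)) * Polynomial.X) := by
  obtain ⟨N, hN⟩ := exists_pow_mul_coeff_mem_range G
  obtain ⟨B', h, x, -, hx⟩ := exists_transitF_eq_toFge_mul_pow he hπ h0 N
  have hG : ∀ j, ι B' (ϖ ^ N) * (G.map (τ h)).coeff j ∈ (ι B').range := by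
    intro j
    obtain ⟨y, hy⟩ := hN j
    exact ⟨y, by rw [Polynomial.coeff_map, ← transitF_toFge h, hy, map_mul, map_pow, map_pow,
      transitF_toFge]⟩
  obtain ⟨P, hP⟩ := exists_C_mul_map_eq_comp_C_mul_X (ι B')
    (by rw [map_pow]; exact (isUnit_toFge_piO B').pow N) ⟨ϖ ^ N, rfl⟩
    (by rw [Polynomial.coeff_map, h1, map_one]) hG
    ⟨x, by rw [Polynomial.coeff_map, hx, map_pow, mul_comm]⟩
  exact ⟨B', h, N, P, hP⟩

lemma exists_isRoot_map_transitF [∀ i, IsDomain (O i)]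
    [∀ i, IsAdicComplete (Ideal.span {π i}) (O i)] (he : ∀ i, i ≤ e i) (hπ : ∀ i, π i ≠ 0)
    {B : ℕ} (G : (𝔽 B)[X]) (h1 : G.coeff 1 = 1) (h0 : Φ B (G.coeff 0) = 0) :
    ∃ (B' : ℕ) (h : B ≤ B') (t : 𝔽 B'),
      (G.map (τ h)).IsRoot t ∧ Φ B' t = 0 := by
  obtain ⟨B₁, h, N, P, hP⟩ := exists_rescaled_lift he hπ G h1 h0
  have hc : Φ B₁ (ι B₁ (ϖ ^ N)) ≠ 0 := by
    rw [FgeBtoFinf_toFge, map_ne_zero_iff _ (IsFractionRing.injective _ _)]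
    exact pow_ne_zero _ PowerSeries.X_ne_zero
  have hcoeff : ∀ j, Φ B₁ (ι B₁ (ϖ ^ N)) * algebraMap (PowerSeries k) 𝕂 (P.coeff j : ProdRing k O).2
      = Φ B (G.coeff j) * Φ B₁ (ι B₁ (ϖ ^ N)) ^ j := fun j => by
    have := congr_arg (fun Q => Φ B₁ (Q.coeff j)) hP
    simp only [Polynomial.coeff_C_mul, Polynomial.coeff_map, comp_C_mul_X_coeff, map_mul,
      map_pow (Φ B₁), FgeBtoFinf_transitF] at this
    rwa [FgeBtoFinf_toFge _ (P.coeff j)] at this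
  have hP1 : (P.coeff 1 : ProdRing k O).2 = 1 := by
    have := hcoeff 1
    rw [h1, map_one, one_mul, pow_one, mul_eq_left₀ hc] at this
    exact IsFractionRing.injective _ 𝕂 (by rw [this, map_one])
  have hP0 : (P.coeff 0 : ProdRing k O).2 = 0 := by
    have := hcoeff 0
    rw [h0, zero_mul, mul_eq_zero, or_iff_right hc] at this
    exact (map_eq_zero_iff _ (IsFractionRing.injective _ _)).mp this
  obtain ⟨a, ha2, ha⟩ := exists_eventually_toFge_eval_eq_zero (hψ := hψ) he P hP1 hP0
  obtain ⟨B₂, haB₂, hB₂⟩ := (ha.and (eventually_ge_atTop B₁)).exists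
  refine ⟨B₂, h.trans hB₂, ι B₂ (ϖ ^ N * a), ?_, by simp [FgeBtoFinf_toFge, ha2]⟩
  have := congr_arg (fun Q => (Q.map (τ hB₂)).eval (ι B₂ a)) hP
  simp only [Polynomial.map_mul, Polynomial.map_C, Polynomial.map_map, Polynomial.map_comp,
    Polynomial.map_X, transitF_comp_toFge, transitF_comp_transitF, eval_mul, eval_C,
    eval_map_apply, haB₂, mul_zero, eval_comp, eval_X, transitF_toFge] at this
  rw [IsRoot, map_mul, ← this]

end CloseFields

theorem statement_7_general
    (k : Type) [Field k]
    (O : ℕ → Type) [∀ i, CommRing (O i)] [∀ i, IsDomain (O i)]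
    (π : ∀ i, O i) (hπ : ∀ i, Irreducible (π i))
    [∀ i, IsAdicComplete (Ideal.span {π i}) (O i)]
    (e : ℕ → ℕ) (he : ∀ i, i ≤ e i)
    (ψ : ∀ i, ((PowerSeries k) ⧸ (Ideal.span {(X : PowerSeries k) ^ e i})) ≃+*
      ((O i) ⧸ (Ideal.span {π i ^ e i})))
    (hψ : ∀ i, ψ i (Ideal.Quotient.mk _ (X : PowerSeries k)) = Ideal.Quotient.mk _ (π i))
    (A : Type) [CommRing A]
    (g : ∀ B : ℕ, FgeBI k O π e ψ hψ B →+* A)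
    (hcompat : ∀ B : ℕ, (g (B + 1)).comp (FgeBstep k O π e ψ hψ B) = g B)
    (hsurj : ∀ a : A, ∃ (B : ℕ) (x : FgeBI k O π e ψ hψ B), g B x = a)
    (hker : ∀ (B : ℕ) (x : FgeBI k O π e ψ hψ B), g B x = 0 →
      ∃ (B' : ℕ) (h : B ≤ B'), transitF k O π e ψ hψ h x = 0) :
    HenselianLocalRing A
    ∧ ∀ h : A →+* FractionRing (PowerSeries k),
        (∀ B : ℕ, h.comp (g B) = FgeBtoFinf k O π e ψ hψ B) →
        Function.Surjective h ∧ (RingHom.ker h).IsMaximal := by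
  have hπ' : ∀ i, π i ≠ 0 := fun i => (hπ i).ne_zero
  -- `transitF` is `natTransit (FgeBstep k O π e ψ hψ)` by definition.
  have hA : IsNatColimit (FgeBstep k O π e ψ hψ) g := ⟨hcompat, hsurj, hker⟩
  refine ⟨hA.henselianLocalRing CloseFields.FgeBtoFinf_comp_FgeBstep
    CloseFields.FgeBtoFinf_surjective
    (fun _ _ hz => CloseFields.exists_isUnit_transitF_one_add he hπ' hz)
    (fun _ G h1 h0 => CloseFields.exists_isRoot_map_transitF he hπ' G h1 h0), fun h hh => ?_⟩
  have hsurj : Function.Surjective h := .of_comp (g := g 0) <| by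
    rw [← RingHom.coe_comp, hh 0]
    exact CloseFields.FgeBtoFinf_surjective 0
  exact ⟨hsurj, RingHom.ker_isMaximal_of_surjective h hsurj⟩

theorem statement_7
    (p : ℕ) (hp : p.Prime)
    (k : Type) [Field k] [CharP k p] [ExpChar k p] [PerfectRing k p]
    (O : ℕ → Type) [∀ i, CommRing (O i)] [∀ i, IsDomain (O i)]
    [∀ i, IsDiscreteValuationRing (O i)] [∀ i, CharZero (O i)]
    (π : ∀ i, O i) (hπ : ∀ i, Irreducible (π i))
    [∀ i, IsAdicComplete (Ideal.span {π i}) (O i)]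
    (ρ : ∀ i, ((O i) ⧸ (Ideal.span {π i})) ≃+* k)
    (e : ℕ → ℕ) (he : ∀ i, i ≤ e i)
    (hpe : ∀ i, Ideal.span {((p : O i))} = Ideal.span {π i ^ e i})
    (ψ : ∀ i, ((PowerSeries k) ⧸ (Ideal.span {(X : PowerSeries k) ^ e i})) ≃+*
      ((O i) ⧸ (Ideal.span {π i ^ e i})))
    (hψ : ∀ i, ψ i (Ideal.Quotient.mk _ (X : PowerSeries k)) = Ideal.Quotient.mk _ (π i))
    (A : Type) [CommRing A]
    (g : ∀ B : ℕ, FgeBI k O π e ψ hψ B →+* A)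
    (hcompat : ∀ B : ℕ, (g (B + 1)).comp (FgeBstep k O π e ψ hψ B) = g B)
    (hsurj : ∀ a : A, ∃ (B : ℕ) (x : FgeBI k O π e ψ hψ B), g B x = a)
    (hker : ∀ (B : ℕ) (x : FgeBI k O π e ψ hψ B), g B x = 0 →
      ∃ (B' : ℕ) (h : B ≤ B'), transitF k O π e ψ hψ h x = 0) :
    HenselianLocalRing A
    ∧ ∀ h : A →+* FractionRing (PowerSeries k),
        (∀ B : ℕ, h.comp (g B) = FgeBtoFinf k O π e ψ hψ B) →
        Function.Surjective h ∧ (RingHom.ker h).IsMaximal :=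
  statement_7_general k O π hπ e he ψ hψ A g hcompat hsurj hker
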